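/- For the Kerr–(anti-)de Sitter black hole and all (r, θ) with r² + a²cos²θ > 0, the complex combination (I₁ + iI₂)⁴(I₃ − iI₄)³ is purely real and equals 73383542784000 · m¹⁴ · E(r, θ)³/(r² + a²cos²θ)²⁷; in particular its imaginary part vanishes, which is equivalent to the syzygy 4I₁I₂I₃(I₃² − 3I₄²)(I₁² − I₂²) = I₄(3I₃² − I₄²)(I₁⁴ − 6I₁²I₂² + I₂⁴). -/
import Mathlib


noncomputable section

namespace KerrAdS

/-- `ρ² = r² + a² cos²θ` in Boyer–Lindquist coordinates. -/
def rho2 (a r θ : ℝ) : ℝ := r ^ 2 + a ^ 2 * Real.cos θ ^ 2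

/-- The complex combination `I₁ + i I₂ = 48 m² (r − i a cos θ)⁶ / ρ¹²`
(the orientation convention `I₁ + iI₂ = 48 Ψ₂²` with `Ψ₂ = −m/(r + i a cos θ)³`). -/
def Ic (a m r θ : ℝ) : ℂ :=
  48 * (m : ℂ) ^ 2 * ((r : ℂ) - Complex.I * ((a * Real.cos θ : ℝ) : ℂ)) ^ 6 /
    ((rho2 a r θ : ℝ) : ℂ) ^ 6

/-- The Weyl invariant `I₁ = C_{αβγδ} C^{αβγδ}` of the Kerr–(anti-)de Sitter black hole. -/
def I1 (a m r θ : ℝ) : ℝ := (Ic a m r θ).re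

/-- The Chern–Pontryagin invariant `I₂ = C*_{αβγδ} C^{αβγδ}`. -/
def I2 (a m r θ : ℝ) : ℝ := (Ic a m r θ).im

/-- `Δ_r = (1 − Λr²/3)(r² + a²) − 2mr`. -/
def Δr (a m Λ r : ℝ) : ℝ := (1 - Λ * r ^ 2 / 3) * (r ^ 2 + a ^ 2) - 2 * m * r

/-- `Δ_θ = 1 + (a²Λ/3) cos²θ`. -/
def Δθ (a Λ θ : ℝ) : ℝ := 1 + a ^ 2 * Λ / 3 * Real.cos θ ^ 2

/-- The gradient invariant `I₅ = ∇_μ I₁ ∇^μ I₁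
  = (Δ_r/ρ²)(∂_r I₁)² + (Δ_θ/ρ²)(∂_θ I₁)²`. -/
def I5 (a m Λ r θ : ℝ) : ℝ :=
  Δr a m Λ r / rho2 a r θ * (deriv (fun r' => I1 a m r' θ) r) ^ 2 +
    Δθ a Λ θ / rho2 a r θ * (deriv (fun θ' => I1 a m r θ') θ) ^ 2

/-- The gradient invariant `I₆ = ∇_μ I₂ ∇^μ I₂
  = (Δ_r/ρ²)(∂_r I₂)² + (Δ_θ/ρ²)(∂_θ I₂)²`. -/
def I6 (a m Λ r θ : ℝ) : ℝ :=
  Δr a m Λ r / rho2 a r θ * (deriv (fun r' => I2 a m r' θ) r) ^ 2 +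
    Δθ a Λ θ / rho2 a r θ * (deriv (fun θ' => I2 a m r θ') θ) ^ 2

/-- The gradient invariant `I₇ = ∇_μ I₁ ∇^μ I₂
  = (Δ_r/ρ²)(∂_r I₁)(∂_r I₂) + (Δ_θ/ρ²)(∂_θ I₁)(∂_θ I₂)`. -/
def I7 (a m Λ r θ : ℝ) : ℝ :=
  Δr a m Λ r / rho2 a r θ *
      (deriv (fun r' => I1 a m r' θ) r) * (deriv (fun r' => I2 a m r' θ) r) +
    Δθ a Λ θ / rho2 a r θ *
      (deriv (fun θ' => I1 a m r θ') θ) * (deriv (fun θ' => I2 a m r θ') θ)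

/-- The ergosurface polynomial
`E = Λa⁴c⁴ − Λa⁴c² − Λa²r² − Λr⁴ + 3a²c² − 6mr + 3r²`, `c = cos θ`. -/
def E (a m Λ r θ : ℝ) : ℝ :=
  Λ * a ^ 4 * Real.cos θ ^ 4 - Λ * a ^ 4 * Real.cos θ ^ 2 - Λ * a ^ 2 * r ^ 2 - Λ * r ^ 4 +
    3 * a ^ 2 * Real.cos θ ^ 2 - 6 * m * r + 3 * r ^ 2

/-- The differential Weyl invariant `I₃ = ∇_μ C_{αβγδ} ∇^μ C^{αβγδ}`
(explicit closed form). -/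
def I3 (a m Λ r θ : ℝ) : ℝ :=
  240 * m ^ 2 / rho2 a r θ ^ 9 *
    (a ^ 4 * Real.cos θ ^ 4 - 4 * a ^ 3 * Real.cos θ ^ 3 * r
      - 6 * a ^ 2 * Real.cos θ ^ 2 * r ^ 2 + 4 * a * Real.cos θ * r ^ 3 + r ^ 4) *
    (a ^ 4 * Real.cos θ ^ 4 + 4 * a ^ 3 * Real.cos θ ^ 3 * r
      - 6 * a ^ 2 * Real.cos θ ^ 2 * r ^ 2 - 4 * a * Real.cos θ * r ^ 3 + r ^ 4) *
    E a m Λ r θ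

/-- The mixed differential Weyl invariant `I₄ = ∇_μ C_{αβγδ} ∇^μ C*^{αβγδ}`
(explicit closed form). -/
def I4 (a m Λ r θ : ℝ) : ℝ :=
  1920 * a * Real.cos θ * r * m ^ 2 / rho2 a r θ ^ 9 * E a m Λ r θ *
    (a ^ 2 * Real.cos θ ^ 2 - 2 * a * Real.cos θ * r - r ^ 2) *
    (a ^ 2 * Real.cos θ ^ 2 + 2 * a * Real.cos θ * r - r ^ 2) *
    (a ^ 2 * Real.cos θ ^ 2 - r ^ 2)

end KerrAdS

namespace KerrAdS

private lemma poly8 (x u : ℂ) :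
    (u ^ 4 - 4 * u ^ 3 * x - 6 * u ^ 2 * x ^ 2 + 4 * u * x ^ 3 + x ^ 4) *
      (u ^ 4 + 4 * u ^ 3 * x - 6 * u ^ 2 * x ^ 2 - 4 * u * x ^ 3 + x ^ 4) -
      Complex.I * (8 * u * x * (u ^ 2 - 2 * u * x - x ^ 2) * (u ^ 2 + 2 * u * x - x ^ 2) *
        (u ^ 2 - x ^ 2)) = (x + Complex.I * u) ^ 8 := by
  have h : (Complex.I) ^ 2 = -1 := Complex.I_sq
  linear_combination (u^8 - 28*x^2*u^6 + 70*x^4*u^4 - 28*x^6*u^2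
    - 8*Complex.I*x*u^7 + 56*Complex.I*x^3*u^5 - 56*Complex.I*x^5*u^3
    - Complex.I^2*u^8 + 28*Complex.I^2*x^2*u^6 - 70*Complex.I^2*x^4*u^4
    + 8*Complex.I^3*x*u^7 - 56*Complex.I^3*x^3*u^5
    + Complex.I^4*u^8 - 28*Complex.I^4*x^2*u^6
    - 8*Complex.I^5*x*u^7 - Complex.I^6*u^8) * h

private lemma imlem (A B C D : ℝ) :
    (((A : ℂ) + (B : ℂ) * Complex.I) ^ 4 * ((C : ℂ) - (D : ℂ) * Complex.I) ^ 3).im =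
      4 * A * B * C * (C ^ 2 - 3 * D ^ 2) * (A ^ 2 - B ^ 2) -
        D * (3 * C ^ 2 - D ^ 2) * (A ^ 4 - 6 * A ^ 2 * B ^ 2 + B ^ 4) := by
  simp only [pow_succ, pow_zero, one_mul, Complex.mul_im, Complex.mul_re,
    Complex.add_re, Complex.add_im, Complex.sub_re, Complex.sub_im,
    Complex.ofReal_re, Complex.ofReal_im, Complex.I_re, Complex.I_im]
  ring

end KerrAdS

namespace KerrAdS

/-- For the Kerr–(anti-)de Sitter black hole, the complex combination
`(I₁ + iI₂)⁴ (I₃ − iI₄)³` is purely real and equals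
`73383542784000 · m¹⁴ · E³ / (r² + a²cos²θ)²⁷`; in particular its imaginary part
vanishes, which is equivalent to the displayed syzygy. -/
theorem third_syzygy (a m Λ r θ : ℝ) (h : 0 < rho2 a r θ) :
    ((I1 a m r θ : ℂ) + (I2 a m r θ : ℂ) * Complex.I) ^ 4 *
        ((I3 a m Λ r θ : ℂ) - (I4 a m Λ r θ : ℂ) * Complex.I) ^ 3 =
      ((73383542784000 * m ^ 14 * E a m Λ r θ ^ 3 / rho2 a r θ ^ 27 : ℝ) : ℂ) ∧
    (((I1 a m r θ : ℂ) + (I2 a m r θ : ℂ) * Complex.I) ^ 4 *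
        ((I3 a m Λ r θ : ℂ) - (I4 a m Λ r θ : ℂ) * Complex.I) ^ 3).im = 0 ∧
    4 * I1 a m r θ * I2 a m r θ * I3 a m Λ r θ *
        (I3 a m Λ r θ ^ 2 - 3 * I4 a m Λ r θ ^ 2) *
        (I1 a m r θ ^ 2 - I2 a m r θ ^ 2) =
      I4 a m Λ r θ * (3 * I3 a m Λ r θ ^ 2 - I4 a m Λ r θ ^ 2) *
        (I1 a m r θ ^ 4 - 6 * I1 a m r θ ^ 2 * I2 a m r θ ^ 2 + I2 a m r θ ^ 4) := by
  have hρ : ((rho2 a r θ : ℝ) : ℂ) ≠ 0 := by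
    exact_mod_cast h.ne'
  set u : ℂ := ((a * Real.cos θ : ℝ) : ℂ) with hu
  have h3 : ((I3 a m Λ r θ : ℝ) : ℂ) - ((I4 a m Λ r θ : ℝ) : ℂ) * Complex.I =
      240 * (m : ℂ) ^ 2 * ((E a m Λ r θ : ℝ) : ℂ) * ((r : ℂ) + Complex.I * u) ^ 8 /
        ((rho2 a r θ : ℝ) : ℂ) ^ 9 := by
    rw [← poly8]
    unfold I3 I4
    push_cast [hu]
    field_simp
    ring
  have key : (((r : ℂ) - Complex.I * u) * ((r : ℂ) + Complex.I * u)) =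
      ((rho2 a r θ : ℝ) : ℂ) := by
    have h2 : (Complex.I) ^ 2 = -1 := Complex.I_sq
    unfold rho2
    push_cast [hu]
    linear_combination (-(a : ℂ)^2 * Complex.cos (θ : ℂ)^2) * h2
  have main : ((I1 a m r θ : ℂ) + (I2 a m r θ : ℂ) * Complex.I) ^ 4 *
      ((I3 a m Λ r θ : ℂ) - (I4 a m Λ r θ : ℂ) * Complex.I) ^ 3 =
      ((73383542784000 * m ^ 14 * E a m Λ r θ ^ 3 / rho2 a r θ ^ 27 : ℝ) : ℂ) := by
    unfold I1 I2
    rw [Complex.re_add_im, h3]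
    unfold Ic
    rw [← hu]
    calc (48 * (m : ℂ) ^ 2 * ((r : ℂ) - Complex.I * u) ^ 6 /
            ((rho2 a r θ : ℝ) : ℂ) ^ 6) ^ 4 *
          (240 * (m : ℂ) ^ 2 * ((E a m Λ r θ : ℝ) : ℂ) * ((r : ℂ) + Complex.I * u) ^ 8 /
            ((rho2 a r θ : ℝ) : ℂ) ^ 9) ^ 3
        = 73383542784000 * (m : ℂ) ^ 14 * ((E a m Λ r θ : ℝ) : ℂ) ^ 3 *
            ((((r : ℂ) - Complex.I * u) * ((r : ℂ) + Complex.I * u)) ^ 24) /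
            ((rho2 a r θ : ℝ) : ℂ) ^ 51 := by ring
      _ = ((73383542784000 * m ^ 14 * E a m Λ r θ ^ 3 / rho2 a r θ ^ 27 : ℝ) : ℂ) := by
          rw [key]
          push_cast
          field_simp
  refine ⟨main, ?_, ?_⟩
  · rw [main]; exact Complex.ofReal_im _
  · have him : (((I1 a m r θ : ℂ) + (I2 a m r θ : ℂ) * Complex.I) ^ 4 *
        ((I3 a m Λ r θ : ℂ) - (I4 a m Λ r θ : ℂ) * Complex.I) ^ 3).im = 0 := by
      rw [main]; exact Complex.ofReal_im _
    rw [imlem] at him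
    linarith

end KerrAdS
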